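/- An algebra A in a monoidal category C is Frobenius if and only if A admits a left dual A* in C together with an isomorphism A ≅ A* of right A-modules, where A* carries the right A-action (ev_A ⊗ id_{A*}) ∘ (id_{A*} ⊗ m_A ⊗ id_{A*}) ∘ (id_{A*} ⊗ id_A ⊗ coev_A). -/

import Mathlib

open CategoryTheory CategoryTheory.MonoidalCategory

universe v u

variable {C : Type u} [Category.{v} C] [MonoidalCategory C]

/-- `(ϑ, e)` is a Frobenius pair for the algebra `A`. -/
def Mon_.IsFrobeniusPair (A : Mon C) (ϑ : A.X ⟶ 𝟙_ C) (e : 𝟙_ C ⟶ A.X ⊗ A.X) : Prop :=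
  ((ρ_ A.X).inv ≫ (A.X ◁ e) ≫ (α_ A.X A.X A.X).inv ≫ (MonObj.mul (X := A.X) ▷ A.X) =
      (λ_ A.X).inv ≫ (e ▷ A.X) ≫ (α_ A.X A.X A.X).hom ≫ (A.X ◁ MonObj.mul (X := A.X))) ∧
    (e ≫ (ϑ ▷ A.X) ≫ (λ_ A.X).hom = MonObj.one (X := A.X)) ∧
    (e ≫ (A.X ◁ ϑ) ≫ (ρ_ A.X).hom = MonObj.one (X := A.X))

/-- `A` is a Frobenius algebra. -/
def Mon_.IsFrobenius (A : Mon C) : Prop :=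
  ∃ (ϑ : A.X ⟶ 𝟙_ C) (e : 𝟙_ C ⟶ A.X ⊗ A.X), Mon_.IsFrobeniusPair A ϑ e

/-- The right `A`-action on a left dual `D` of `A`:
`(ev_A ⊗ id_D) ∘ (id_D ⊗ m_A ⊗ id_D) ∘ (id_{D ⊗ A} ⊗ coev_A)`. -/
noncomputable def dualRightAction (A : Mon C) (D : C) (ev : D ⊗ A.X ⟶ 𝟙_ C)
    (coev : 𝟙_ C ⟶ A.X ⊗ D) : D ⊗ A.X ⟶ D :=
  (ρ_ (D ⊗ A.X)).inv ≫ ((D ⊗ A.X) ◁ coev) ⊗≫ ((D ◁ MonObj.mul (X := A.X)) ▷ D) ⊗≫ (ev ▷ D) ≫ (λ_ D).hom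

section Back

variable (A : Mon C) (D : C) (ev : D ⊗ A.X ⟶ 𝟙_ C) (coev : 𝟙_ C ⟶ A.X ⊗ D)

lemma act_eq : dualRightAction A D ev coev = (ρ_ (D ⊗ A.X)).inv ≫ ((D ⊗ A.X) ◁ coev) ≫
      (α_ D A.X (A.X ⊗ D)).hom ≫ (D ◁ (α_ A.X A.X D).inv) ≫ (α_ D (A.X ⊗ A.X) D).inv ≫
      ((D ◁ (MonObj.mul (X := A.X))) ▷ D) ≫ (ev ▷ D) ≫ (λ_ D).hom := by
  dsimp [dualRightAction]; monoidal

lemma snake1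
    (h1 : (λ_ A.X).inv ≫ (coev ▷ A.X) ≫ (α_ A.X D A.X).hom ≫ (A.X ◁ ev) ≫ (ρ_ A.X).hom =
      𝟙 A.X) : (𝟙 A.X ⊗≫ coev ▷ A.X ⊗≫ A.X ◁ ev ⊗≫ 𝟙 A.X : A.X ⟶ A.X) = 𝟙 A.X := by
  conv_rhs => rw [← h1]
  monoidal

lemma snake2
    (h2 : (ρ_ D).inv ≫ (D ◁ coev) ≫ (α_ D A.X D).inv ≫ (ev ▷ D) ≫ (λ_ D).hom = 𝟙 D) : (𝟙 D ⊗≫ D ◁ coev ⊗≫ ev ▷ D ⊗≫ 𝟙 D : D ⟶ D) = 𝟙 D := by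
  conv_rhs => rw [← h2]
  monoidal

lemma act_one
    (h2 : (ρ_ D).inv ≫ (D ◁ coev) ≫ (α_ D A.X D).inv ≫ (ev ▷ D) ≫ (λ_ D).hom = 𝟙 D) : (ρ_ D).inv ≫ (D ◁ (MonObj.one (X := A.X))) ≫ dualRightAction A D ev coev = 𝟙 D :=
  calc
    _ = 𝟙 D ⊗≫ ((D ◁ (MonObj.one (X := A.X))) ▷ 𝟙_ C ≫ (D ⊗ A.X) ◁ coev) ⊗≫ ((D ◁ (MonObj.mul (X := A.X))) ▷ D) ⊗≫
        ev ▷ D ⊗≫ 𝟙 D := by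
      rw [act_eq]; monoidal
    _ = 𝟙 D ⊗≫ ((D ⊗ 𝟙_ C) ◁ coev ≫ (D ◁ (MonObj.one (X := A.X))) ▷ (A.X ⊗ D)) ⊗≫ ((D ◁ (MonObj.mul (X := A.X))) ▷ D) ⊗≫
        ev ▷ D ⊗≫ 𝟙 D := by
      rw [← whisker_exchange]
    _ = 𝟙 D ⊗≫ D ◁ coev ⊗≫ ((D ◁ (((MonObj.one (X := A.X)) ▷ A.X) ≫ (MonObj.mul (X := A.X)))) ▷ D) ⊗≫ ev ▷ D ⊗≫ 𝟙 D := by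
      monoidal
    _ = 𝟙 D ⊗≫ D ◁ coev ⊗≫ ((D ◁ (λ_ A.X).hom) ▷ D) ⊗≫ ev ▷ D ⊗≫ 𝟙 D := by
      rw [MonObj.one_mul A.X]
    _ = 𝟙 D ⊗≫ D ◁ coev ⊗≫ ev ▷ D ⊗≫ 𝟙 D := by monoidal
    _ = 𝟙 D := snake2 A D ev coev h2

section

variable (h1 : (λ_ A.X).inv ≫ (coev ▷ A.X) ≫ (α_ A.X D A.X).hom ≫ (A.X ◁ ev) ≫ (ρ_ A.X).hom =
      𝟙 A.X)
include h1

/-- `ev (d ▹ a, a') = ev (d, m(a,a'))`. -/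
lemma act_ev : (dualRightAction A D ev coev ▷ A.X) ≫ ev =
    (α_ D A.X A.X).hom ≫ (D ◁ (MonObj.mul (X := A.X))) ≫ ev :=
  calc
    _ = 𝟙 ((D ⊗ A.X) ⊗ A.X) ⊗≫ ((D ⊗ A.X) ◁ coev) ▷ A.X ⊗≫
        ((((D ◁ (MonObj.mul (X := A.X))) ≫ ev) ▷ (D ⊗ A.X)) ≫ (𝟙_ C ◁ ev)) ⊗≫ 𝟙 (𝟙_ C) := by
      rw [act_eq]; monoidal
    _ = 𝟙 ((D ⊗ A.X) ⊗ A.X) ⊗≫ ((D ⊗ A.X) ◁ coev) ▷ A.X ⊗≫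
        (((D ⊗ (A.X ⊗ A.X)) ◁ ev) ≫ (((D ◁ (MonObj.mul (X := A.X))) ≫ ev) ▷ 𝟙_ C)) ⊗≫ 𝟙 (𝟙_ C) := by
      rw [whisker_exchange]
    _ = 𝟙 ((D ⊗ A.X) ⊗ A.X) ⊗≫
        ((D ⊗ A.X) ◁ (𝟙 A.X ⊗≫ coev ▷ A.X ⊗≫ A.X ◁ ev ⊗≫ 𝟙 A.X)) ⊗≫
        ((D ◁ (MonObj.mul (X := A.X))) ≫ ev) ⊗≫ 𝟙 (𝟙_ C) := by
      monoidal
    _ = _ := by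
      rw [snake1 A D ev coev h1]; monoidal

/-- `m(a,c1) ⊗ c2 = c1 ⊗ (c2 ▹ a)`. -/
lemma coev_act : (ρ_ A.X).inv ≫ (A.X ◁ coev) ≫ (α_ A.X A.X D).inv ≫ ((MonObj.mul (X := A.X)) ▷ D) =
    (λ_ A.X).inv ≫ (coev ▷ A.X) ≫ (α_ A.X D A.X).hom ≫
      (A.X ◁ dualRightAction A D ev coev) := by
  symm
  calc
    _ = 𝟙 A.X ⊗≫ (coev ▷ A.X ≫
          ((A.X ⊗ D) ◁ ((ρ_ A.X).inv ≫ (A.X ◁ coev) ≫ (α_ A.X A.X D).inv ≫ ((MonObj.mul (X := A.X)) ▷ D)))) ⊗≫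
        (A.X ◁ (ev ▷ D)) ⊗≫ 𝟙 (A.X ⊗ D) := by
      rw [act_eq]; monoidal
    _ = 𝟙 A.X ⊗≫ ((𝟙_ C ◁ ((ρ_ A.X).inv ≫ (A.X ◁ coev) ≫ (α_ A.X A.X D).inv ≫ ((MonObj.mul (X := A.X)) ▷ D))) ≫
          (coev ▷ (A.X ⊗ D))) ⊗≫ (A.X ◁ (ev ▷ D)) ⊗≫ 𝟙 (A.X ⊗ D) := by
      rw [← whisker_exchange]
    _ = ((ρ_ A.X).inv ≫ (A.X ◁ coev) ≫ (α_ A.X A.X D).inv ≫ ((MonObj.mul (X := A.X)) ▷ D)) ≫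
        ((𝟙 A.X ⊗≫ coev ▷ A.X ⊗≫ A.X ◁ ev ⊗≫ 𝟙 A.X) ▷ D) := by
      monoidal
    _ = _ := by
      rw [snake1 A D ev coev h1]; simp

end


section

variable (Φ : A.X ≅ D)

noncomputable def theta : A.X ⟶ 𝟙_ C :=
  (λ_ A.X).inv ≫ (((MonObj.one (X := A.X)) ≫ Φ.hom) ▷ A.X) ≫ ev

noncomputable def cop : 𝟙_ C ⟶ A.X ⊗ A.X := coev ≫ (A.X ◁ Φ.inv)

variable (hΦ : (MonObj.mul (X := A.X)) ≫ Φ.hom = (Φ.hom ▷ A.X) ≫ dualRightAction A D ev coev)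
include hΦ

lemma hact : dualRightAction A D ev coev ≫ Φ.inv = (Φ.inv ▷ A.X) ≫ (MonObj.mul (X := A.X)) := by
  rw [← cancel_mono Φ.hom]
  simp [hΦ, ← comp_whiskerRight_assoc]

section
variable (h1 : (λ_ A.X).inv ≫ (coev ▷ A.X) ≫ (α_ A.X D A.X).hom ≫ (A.X ◁ ev) ≫ (ρ_ A.X).hom =
      𝟙 A.X)
include h1

lemma mul_theta : (MonObj.mul (X := A.X)) ≫ theta A D ev Φ = (Φ.hom ▷ A.X) ≫ ev :=
  calc
    _ = 𝟙 (A.X ⊗ A.X) ⊗≫ ((𝟙_ C ◁ (MonObj.mul (X := A.X))) ≫ (((MonObj.one (X := A.X)) ≫ Φ.hom) ▷ A.X)) ⊗≫ ev := by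
      dsimp only [theta]; monoidal
    _ = 𝟙 (A.X ⊗ A.X) ⊗≫ (((MonObj.one (X := A.X)) ≫ Φ.hom) ▷ (A.X ⊗ A.X)) ⊗≫
        ((α_ D A.X A.X).hom ≫ (D ◁ (MonObj.mul (X := A.X))) ≫ ev) := by
      rw [whisker_exchange]; monoidal
    _ = 𝟙 (A.X ⊗ A.X) ⊗≫ (((MonObj.one (X := A.X)) ≫ Φ.hom) ▷ (A.X ⊗ A.X)) ⊗≫
        ((dualRightAction A D ev coev ▷ A.X) ≫ ev) := by
      rw [act_ev A D ev coev h1]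
    _ = 𝟙 (A.X ⊗ A.X) ⊗≫ (((((MonObj.one (X := A.X)) ≫ Φ.hom) ▷ A.X) ≫ dualRightAction A D ev coev) ▷ A.X) ⊗≫
        ev := by
      monoidal
    _ = 𝟙 (A.X ⊗ A.X) ⊗≫ (((λ_ A.X).hom ≫ Φ.hom) ▷ A.X) ⊗≫ ev := by
      have key : (((MonObj.one (X := A.X)) ≫ Φ.hom) ▷ A.X) ≫ dualRightAction A D ev coev =
          (λ_ A.X).hom ≫ Φ.hom := by
        rw [comp_whiskerRight, Category.assoc, ← hΦ, MonObj.one_mul_assoc A.X]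
      rw [key]
    _ = _ := by monoidal

lemma frob3 : cop A D coev Φ ≫ (A.X ◁ theta A D ev Φ) ≫ (ρ_ A.X).hom = (MonObj.one (X := A.X)) := by
  have thetaφ : Φ.inv ≫ theta A D ev Φ = (ρ_ D).inv ≫ (D ◁ (MonObj.one (X := A.X))) ≫ ev :=
    calc
      _ = Φ.inv ≫ (ρ_ A.X).inv ≫ (A.X ◁ (MonObj.one (X := A.X))) ≫ (MonObj.mul (X := A.X)) ≫ theta A D ev Φ := by
        rw [MonObj.mul_one_assoc A.X]; simp
      _ = Φ.inv ≫ (ρ_ A.X).inv ≫ ((A.X ◁ (MonObj.one (X := A.X))) ≫ (Φ.hom ▷ A.X)) ≫ ev := by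
        rw [mul_theta A D ev coev Φ hΦ h1]; simp
      _ = Φ.inv ≫ (ρ_ A.X).inv ≫ ((Φ.hom ▷ 𝟙_ C) ≫ (D ◁ (MonObj.one (X := A.X)))) ≫ ev := by
        rw [whisker_exchange]
      _ = _ := by
        simp only [Category.assoc]
        rw [← rightUnitor_inv_naturality_assoc]; simp
  calc
    _ = coev ≫ (A.X ◁ (Φ.inv ≫ theta A D ev Φ)) ≫ (ρ_ A.X).hom := by
      dsimp only [cop]; simp
    _ = coev ≫ (A.X ◁ ((ρ_ D).inv ≫ (D ◁ (MonObj.one (X := A.X))) ≫ ev)) ≫ (ρ_ A.X).hom := by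
      rw [thetaφ]
    _ = 𝟙 (𝟙_ C) ⊗≫ ((coev ▷ 𝟙_ C) ≫ ((A.X ⊗ D) ◁ (MonObj.one (X := A.X)))) ⊗≫ (A.X ◁ ev) ⊗≫ 𝟙 A.X := by
      monoidal
    _ = 𝟙 (𝟙_ C) ⊗≫ ((𝟙_ C ◁ (MonObj.one (X := A.X))) ≫ (coev ▷ A.X)) ⊗≫ (A.X ◁ ev) ⊗≫ 𝟙 A.X := by
      rw [← whisker_exchange]
    _ = (MonObj.one (X := A.X)) ≫ (𝟙 A.X ⊗≫ coev ▷ A.X ⊗≫ A.X ◁ ev ⊗≫ 𝟙 A.X) := by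
      monoidal
    _ = (MonObj.one (X := A.X)) := by rw [snake1 A D ev coev h1]; simp

lemma frob1 : (ρ_ A.X).inv ≫ (A.X ◁ cop A D coev Φ) ≫ (α_ A.X A.X A.X).inv ≫
      ((MonObj.mul (X := A.X)) ▷ A.X) =
    (λ_ A.X).inv ≫ (cop A D coev Φ ▷ A.X) ≫ (α_ A.X A.X A.X).hom ≫ (A.X ◁ (MonObj.mul (X := A.X))) :=
  calc
    _ = 𝟙 A.X ⊗≫ A.X ◁ coev ⊗≫ (((A.X ⊗ A.X) ◁ Φ.inv) ≫ ((MonObj.mul (X := A.X)) ▷ A.X)) ⊗≫ 𝟙 (A.X ⊗ A.X) := by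
      dsimp only [cop]; monoidal
    _ = 𝟙 A.X ⊗≫ A.X ◁ coev ⊗≫ (((MonObj.mul (X := A.X)) ▷ D) ≫ (A.X ◁ Φ.inv)) ⊗≫ 𝟙 (A.X ⊗ A.X) := by
      rw [whisker_exchange]
    _ = ((ρ_ A.X).inv ≫ (A.X ◁ coev) ≫ (α_ A.X A.X D).inv ≫ ((MonObj.mul (X := A.X)) ▷ D)) ≫ (A.X ◁ Φ.inv) := by
      monoidal
    _ = ((λ_ A.X).inv ≫ (coev ▷ A.X) ≫ (α_ A.X D A.X).hom ≫
        (A.X ◁ dualRightAction A D ev coev)) ≫ (A.X ◁ Φ.inv) := by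
      rw [coev_act A D ev coev h1]
    _ = (λ_ A.X).inv ≫ (coev ▷ A.X) ≫ (α_ A.X D A.X).hom ≫
        (A.X ◁ (dualRightAction A D ev coev ≫ Φ.inv)) := by
      simp
    _ = (λ_ A.X).inv ≫ (coev ▷ A.X) ≫ (α_ A.X D A.X).hom ≫
        (A.X ◁ ((Φ.inv ▷ A.X) ≫ (MonObj.mul (X := A.X)))) := by
      rw [hact A D ev coev Φ hΦ]
    _ = _ := by
      dsimp only [cop]; monoidal

end

lemma frob2 (h2 : (ρ_ D).inv ≫ (D ◁ coev) ≫ (α_ D A.X D).inv ≫ (ev ▷ D) ≫ (λ_ D).hom = 𝟙 D) :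
    cop A D coev Φ ≫ (theta A D ev Φ ▷ A.X) ≫ (λ_ A.X).hom = (MonObj.one (X := A.X)) :=
  calc
    _ = coev ≫ ((A.X ◁ Φ.inv) ≫ (theta A D ev Φ ▷ A.X)) ≫ (λ_ A.X).hom := by
      dsimp only [cop]; simp
    _ = coev ≫ ((theta A D ev Φ ▷ D) ≫ (𝟙_ C ◁ Φ.inv)) ≫ (λ_ A.X).hom := by
      rw [whisker_exchange]
    _ = 𝟙 (𝟙_ C) ⊗≫ ((𝟙_ C ◁ coev) ≫ (((MonObj.one (X := A.X)) ≫ Φ.hom) ▷ (A.X ⊗ D))) ⊗≫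
        (ev ▷ D) ≫ (λ_ D).hom ≫ Φ.inv := by
      dsimp only [theta]; monoidal
    _ = 𝟙 (𝟙_ C) ⊗≫ ((((MonObj.one (X := A.X)) ≫ Φ.hom) ▷ 𝟙_ C) ≫ (D ◁ coev)) ⊗≫
        (ev ▷ D) ≫ (λ_ D).hom ≫ Φ.inv := by
      rw [whisker_exchange]
    _ = ((MonObj.one (X := A.X)) ≫ Φ.hom) ≫ (𝟙 D ⊗≫ D ◁ coev ⊗≫ ev ▷ D ⊗≫ 𝟙 D) ≫ Φ.inv := by
      monoidal
    _ = (MonObj.one (X := A.X)) := by rw [snake2 A D ev coev h2]; simp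

end

end Back

section Fwd

variable (A : Mon C) (ϑ : A.X ⟶ 𝟙_ C) (e : 𝟙_ C ⟶ A.X ⊗ A.X)
variable (hfa : (ρ_ A.X).inv ≫ (A.X ◁ e) ≫ (α_ A.X A.X A.X).inv ≫ ((MonObj.mul (X := A.X)) ▷ A.X) =
      (λ_ A.X).inv ≫ (e ▷ A.X) ≫ (α_ A.X A.X A.X).hom ≫ (A.X ◁ (MonObj.mul (X := A.X))))
variable (hf1 : e ≫ (ϑ ▷ A.X) ≫ (λ_ A.X).hom = (MonObj.one (X := A.X)))
variable (hf2 : e ≫ (A.X ◁ ϑ) ≫ (ρ_ A.X).hom = (MonObj.one (X := A.X)))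

include hfa hf2 in
lemma fwd1 : (λ_ A.X).inv ≫ (e ▷ A.X) ≫ (α_ A.X A.X A.X).hom ≫ (A.X ◁ ((MonObj.mul (X := A.X)) ≫ ϑ)) ≫
    (ρ_ A.X).hom = 𝟙 A.X :=
  calc
    _ = ((λ_ A.X).inv ≫ (e ▷ A.X) ≫ (α_ A.X A.X A.X).hom ≫ (A.X ◁ (MonObj.mul (X := A.X)))) ≫
        (A.X ◁ ϑ) ≫ (ρ_ A.X).hom := by simp
    _ = ((ρ_ A.X).inv ≫ (A.X ◁ e) ≫ (α_ A.X A.X A.X).inv ≫ ((MonObj.mul (X := A.X)) ▷ A.X)) ≫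
        (A.X ◁ ϑ) ≫ (ρ_ A.X).hom := by rw [← hfa]
    _ = 𝟙 A.X ⊗≫ (A.X ◁ e) ⊗≫ (((MonObj.mul (X := A.X)) ▷ A.X) ≫ (A.X ◁ ϑ)) ⊗≫ 𝟙 A.X := by monoidal
    _ = 𝟙 A.X ⊗≫ (A.X ◁ e) ⊗≫ (((A.X ⊗ A.X) ◁ ϑ) ≫ ((MonObj.mul (X := A.X)) ▷ 𝟙_ C)) ⊗≫ 𝟙 A.X := by
      rw [← whisker_exchange]
    _ = 𝟙 A.X ⊗≫ (A.X ◁ (e ≫ (A.X ◁ ϑ) ≫ (ρ_ A.X).hom)) ⊗≫ (MonObj.mul (X := A.X)) := by monoidal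
    _ = 𝟙 A.X ⊗≫ (A.X ◁ (MonObj.one (X := A.X))) ⊗≫ (MonObj.mul (X := A.X)) := by rw [hf2]
    _ = 𝟙 A.X ⊗≫ ((A.X ◁ (MonObj.one (X := A.X))) ≫ (MonObj.mul (X := A.X))) := by monoidal
    _ = 𝟙 A.X := by rw [MonObj.mul_one A.X]; monoidal

include hfa hf1 in
lemma fwd2 : (ρ_ A.X).inv ≫ (A.X ◁ e) ≫ (α_ A.X A.X A.X).inv ≫ (((MonObj.mul (X := A.X)) ≫ ϑ) ▷ A.X) ≫
    (λ_ A.X).hom = 𝟙 A.X :=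
  calc
    _ = ((ρ_ A.X).inv ≫ (A.X ◁ e) ≫ (α_ A.X A.X A.X).inv ≫ ((MonObj.mul (X := A.X)) ▷ A.X)) ≫
        (ϑ ▷ A.X) ≫ (λ_ A.X).hom := by simp
    _ = ((λ_ A.X).inv ≫ (e ▷ A.X) ≫ (α_ A.X A.X A.X).hom ≫ (A.X ◁ (MonObj.mul (X := A.X)))) ≫
        (ϑ ▷ A.X) ≫ (λ_ A.X).hom := by rw [hfa]
    _ = 𝟙 A.X ⊗≫ (e ▷ A.X) ⊗≫ ((A.X ◁ (MonObj.mul (X := A.X))) ≫ (ϑ ▷ A.X)) ⊗≫ 𝟙 A.X := by monoidal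
    _ = 𝟙 A.X ⊗≫ (e ▷ A.X) ⊗≫ ((ϑ ▷ (A.X ⊗ A.X)) ≫ (𝟙_ C ◁ (MonObj.mul (X := A.X)))) ⊗≫ 𝟙 A.X := by
      rw [whisker_exchange]
    _ = 𝟙 A.X ⊗≫ ((e ≫ (ϑ ▷ A.X) ≫ (λ_ A.X).hom) ▷ A.X) ⊗≫ (MonObj.mul (X := A.X)) := by monoidal
    _ = 𝟙 A.X ⊗≫ ((MonObj.one (X := A.X)) ▷ A.X) ⊗≫ (MonObj.mul (X := A.X)) := by rw [hf1]
    _ = 𝟙 A.X ⊗≫ (((MonObj.one (X := A.X)) ▷ A.X) ≫ (MonObj.mul (X := A.X))) := by monoidal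
    _ = 𝟙 A.X := by rw [MonObj.one_mul A.X]; monoidal

include hfa hf1 in
lemma fwd3 : (MonObj.mul (X := A.X)) = dualRightAction A A.X ((MonObj.mul (X := A.X)) ≫ ϑ) e := by
  have hassoc : (A.X ◁ (MonObj.mul (X := A.X))) ≫ (MonObj.mul (X := A.X)) =
      (α_ A.X A.X A.X).inv ≫ ((MonObj.mul (X := A.X)) ▷ A.X) ≫ (MonObj.mul (X := A.X)) := by
    rw [MonObj.mul_assoc A.X, Iso.inv_hom_id_assoc]
  symm
  calc
    _ = 𝟙 (A.X ⊗ A.X) ⊗≫ ((A.X ⊗ A.X) ◁ e) ⊗≫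
        ((((A.X ◁ (MonObj.mul (X := A.X))) ≫ (MonObj.mul (X := A.X))) ≫ ϑ) ▷ A.X) ⊗≫ 𝟙 A.X := by
      rw [act_eq]; monoidal
    _ = 𝟙 (A.X ⊗ A.X) ⊗≫ ((A.X ⊗ A.X) ◁ e) ⊗≫
        ((((α_ A.X A.X A.X).inv ≫ ((MonObj.mul (X := A.X)) ▷ A.X) ≫ (MonObj.mul (X := A.X))) ≫ ϑ) ▷ A.X) ⊗≫ 𝟙 A.X := by
      rw [hassoc]
    _ = 𝟙 (A.X ⊗ A.X) ⊗≫ (((A.X ⊗ A.X) ◁ e) ≫ ((MonObj.mul (X := A.X)) ▷ (A.X ⊗ A.X))) ⊗≫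
        (((MonObj.mul (X := A.X)) ≫ ϑ) ▷ A.X) ⊗≫ 𝟙 A.X := by monoidal
    _ = 𝟙 (A.X ⊗ A.X) ⊗≫ (((MonObj.mul (X := A.X)) ▷ 𝟙_ C) ≫ (A.X ◁ e)) ⊗≫
        (((MonObj.mul (X := A.X)) ≫ ϑ) ▷ A.X) ⊗≫ 𝟙 A.X := by rw [← whisker_exchange]
    _ = (MonObj.mul (X := A.X)) ≫ ((ρ_ A.X).inv ≫ (A.X ◁ e) ≫ (α_ A.X A.X A.X).inv ≫
        (((MonObj.mul (X := A.X)) ≫ ϑ) ▷ A.X) ≫ (λ_ A.X).hom) := by monoidal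
    _ = (MonObj.mul (X := A.X)) := by rw [fwd2 A ϑ e hfa hf1]; simp

end Fwd

/-- An algebra `A` in a monoidal category is Frobenius iff it admits a left dual `D`
(with evaluation/coevaluation satisfying the triangle identities) together with an
isomorphism `A ≅ D` of right `A`-modules. -/
theorem frobenius_iff_leftDual_rightModule_iso (A : Mon C) :
    Mon_.IsFrobenius A ↔
      ∃ (D : C) (ev : D ⊗ A.X ⟶ 𝟙_ C) (coev : 𝟙_ C ⟶ A.X ⊗ D),
        ((λ_ A.X).inv ≫ (coev ▷ A.X) ≫ (α_ A.X D A.X).hom ≫ (A.X ◁ ev) ≫ (ρ_ A.X).hom =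
            𝟙 A.X) ∧
        ((ρ_ D).inv ≫ (D ◁ coev) ≫ (α_ D A.X D).inv ≫ (ev ▷ D) ≫ (λ_ D).hom = 𝟙 D) ∧
        ∃ Φ : A.X ≅ D, MonObj.mul (X := A.X) ≫ Φ.hom = (Φ.hom ▷ A.X) ≫ dualRightAction A D ev coev := by
  constructor
  · rintro ⟨ϑ, e, hf⟩
    exact ⟨A.X, (MonObj.mul (X := A.X)) ≫ ϑ, e, fwd1 A ϑ e hf.1 hf.2.2, fwd2 A ϑ e hf.1 hf.2.1,
      Iso.refl A.X, by simpa using fwd3 A ϑ e hf.1 hf.2.1⟩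
  · rintro ⟨D, ev, coev, h1, h2, Φ, hΦ⟩
    exact ⟨theta A D ev Φ, cop A D coev Φ,
      ⟨frob1 A D ev coev Φ hΦ h1, frob2 A D ev coev Φ hΦ h2, frob3 A D ev coev Φ hΦ h1⟩⟩
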